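/- For the complete graph K_n, the Sombor index of its m-splitting graph is (n(n-1)²/√2)·(m√(2m²+4m+4) + (m+1)). -/

import Mathlib

open Finset Matrix Polynomial Kronecker

noncomputable def somborIndex {V : Type*} [Fintype V] [DecidableEq V]
    (G : SimpleGraph V) [DecidableRel G.Adj] : ℝ :=
  ∑ e ∈ G.edgeFinset,
    Sym2.lift ⟨fun u v => Real.sqrt ((G.degree u : ℝ) ^ 2 + (G.degree v : ℝ) ^ 2),
      fun u v => by simp [add_comm]⟩ e

/-- The `m`-splitting graph: vertices `(v, 0)` are the original vertices, and
`(v, j)` for `j ≠ 0` are the `m` added copies of `v`, adjacent to the neighbors of `v`. -/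
def splittingGraph {V : Type*} (G : SimpleGraph V) (m : ℕ) :
    SimpleGraph (V × Fin (m + 1)) where
  Adj p q := G.Adj p.1 q.1 ∧ (p.2 = 0 ∨ q.2 = 0)
  symm := ⟨fun p q h => ⟨h.1.symm, h.2.symm⟩⟩
  loopless := ⟨fun p h => G.irrefl h.1⟩

instance {V : Type*} (G : SimpleGraph V) [DecidableRel G.Adj] (m : ℕ) :
    DecidableRel (splittingGraph G m).Adj :=
  fun _ _ => inferInstanceAs (Decidable (_ ∧ _))

/-- The `m`-shadow graph: `m` copies of `G`, with each vertex joined to the neighbors of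
the corresponding vertex in every copy. -/
def shadowGraph {V : Type*} (G : SimpleGraph V) (m : ℕ) :
    SimpleGraph (V × Fin m) where
  Adj p q := G.Adj p.1 q.1
  symm := ⟨fun _ _ h => h.symm⟩
  loopless := ⟨fun p h => G.irrefl h⟩

instance {V : Type*} (G : SimpleGraph V) [DecidableRel G.Adj] (m : ℕ) :
    DecidableRel (shadowGraph G m).Adj :=
  fun p q => inferInstanceAs (Decidable (G.Adj p.1 q.1))

noncomputable def somborMatrix {V : Type*} [Fintype V] [DecidableEq V]
    (G : SimpleGraph V) [DecidableRel G.Adj] : Matrix V V ℝ :=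
  Matrix.of fun u v =>
    if G.Adj u v then Real.sqrt ((G.degree u : ℝ) ^ 2 + (G.degree v : ℝ) ^ 2) else 0

/-! Counting every edge from both ends, twice the Sombor index is a sum over ordered adjacent pairs.
In `Spl_m(G)` the vertex `(v, i)` has degree `(m + 1) d(v)` if `i = 0` and `d(v)` otherwise, and
`(u, i) ~ (v, j)` iff `u ~ v` in `G` and `i = 0 ∨ j = 0`. For `r`-regular `G` the summand depends
only on `(i, j)`, so the sum factors as `n r` times a sum over copy indices: one term
`√2 (m + 1) r` for `i = j = 0` and `2m` terms `r √((m + 1)² + 1)`. -/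

namespace SimpleGraph

variable {V : Type*} [Fintype V] (G : SimpleGraph V) [DecidableRel G.Adj]

theorem sum_dart_edge_eq_two_nsmul {M : Type*} [AddCommMonoid M] [DecidableEq V]
    (F : Sym2 V → M) : ∑ d : G.Dart, F d.edge = 2 • ∑ e ∈ G.edgeFinset, F e := by
  rw [← Finset.sum_fiberwise_of_maps_to (g := Dart.edge) (t := G.edgeFinset)
    (fun d _ => by simp), Finset.smul_sum]
  refine Finset.sum_congr rfl fun e he => ?_
  rw [Finset.sum_congr rfl fun d hd => congrArg F (Finset.mem_filter.mp hd).2,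
    Finset.sum_const, G.dart_edge_fiber_card e (mem_edgeFinset.mp he)]

theorem sum_dart_eq_sum_sum_ite_adj {M : Type*} [AddCommMonoid M] (f : V → V → M) :
    ∑ d : G.Dart, f d.fst d.snd = ∑ u, ∑ v, if G.Adj u v then f u v else 0 := by
  rw [← Fintype.sum_prod_type', ← Finset.sum_filter]
  exact Finset.sum_bij' (fun d _ => d.toProd) (fun p hp => ⟨p, (Finset.mem_filter.mp hp).2⟩)
    (by simp) (by simp) (by simp) (by simp) (by simp)

end SimpleGraph

open SimpleGraph

theorem two_mul_somborIndex {V : Type*} [Fintype V] [DecidableEq V]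
    (G : SimpleGraph V) [DecidableRel G.Adj] :
    2 * somborIndex G = ∑ u, ∑ v, if G.Adj u v then
      √((G.degree u : ℝ) ^ 2 + (G.degree v : ℝ) ^ 2) else 0 := by
  rw [← G.sum_dart_eq_sum_sum_ite_adj, two_mul, ← two_smul ℕ, somborIndex,
    ← G.sum_dart_edge_eq_two_nsmul]
  rfl

section splittingGraph

variable {V : Type*} (G : SimpleGraph V) (m : ℕ)

@[simp]
theorem splittingGraph_adj {p q : V × Fin (m + 1)} :
    (splittingGraph G m).Adj p q ↔ G.Adj p.1 q.1 ∧ (p.2 = 0 ∨ q.2 = 0) :=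
  Iff.rfl

variable [Fintype V] [DecidableRel G.Adj]

theorem splittingGraph_neighborFinset (p : V × Fin (m + 1)) :
    (splittingGraph G m).neighborFinset p =
      G.neighborFinset p.1 ×ˢ if p.2 = 0 then Finset.univ else {0} := by
  ext q
  split_ifs with hp <;>
    simp only [mem_neighborFinset, splittingGraph_adj, Finset.mem_product, Finset.mem_univ,
      Finset.mem_singleton, hp] <;> tauto

theorem splittingGraph_degree (p : V × Fin (m + 1)) :
    (splittingGraph G m).degree p = if p.2 = 0 then G.degree p.1 * (m + 1) else G.degree p.1 := by
  rw [← card_neighborFinset_eq_degree, splittingGraph_neighborFinset, Finset.card_product]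
  split_ifs <;> simp

theorem sum_sum_ite_splittingGraph_adj {M : Type*} [AddCommMonoid M]
    (φ : Fin (m + 1) → Fin (m + 1) → M) :
    ∑ p, ∑ q, (if (splittingGraph G m).Adj p q then φ p.2 q.2 else 0) =
      (∑ u, G.degree u) • ∑ i, ∑ j, if i = 0 ∨ j = 0 then φ i j else 0 := by
  simp only [Fintype.sum_prod_type, splittingGraph_adj, ite_and]
  rw [Finset.sum_smul]
  refine Finset.sum_congr rfl fun u _ => ?_
  rw [Finset.sum_comm]
  simp only [← Finset.ite_sum_zero]
  rw [← Finset.sum_filter, ← neighborFinset_eq_filter, Finset.sum_const,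
    card_neighborFinset_eq_degree]

end splittingGraph

theorem Fin.sum_sum_ite_eq_zero_or_eq_zero {M : Type*} [AddCommMonoid M] {m : ℕ}
    (φ : Fin (m + 1) → Fin (m + 1) → M) :
    ∑ i, ∑ j, (if i = 0 ∨ j = 0 then φ i j else 0) =
      φ 0 0 + ∑ k : Fin m, (φ 0 k.succ + φ k.succ 0) := by
  simp only [Fin.sum_univ_succ, or_true, ↓reduceIte, Fin.succ_ne_zero, or_false,
    Finset.sum_ite_irrel, Finset.sum_const_zero, Finset.sum_add_distrib, Finset.sum_ite_eq',
    Finset.mem_univ]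
  abel

theorem somborIndex_splittingGraph_of_isRegularOfDegree {V : Type*} [Fintype V] [DecidableEq V]
    {G : SimpleGraph V} [DecidableRel G.Adj] {r : ℕ} (hG : G.IsRegularOfDegree r) (m : ℕ) :
    somborIndex (splittingGraph G m) =
      (Fintype.card V * r ^ 2 / √2) * (m * √(2 * m ^ 2 + 4 * m + 4) + (m + 1)) := by
  set w : Fin (m + 1) → ℝ := fun i => if i = 0 then r * (m + 1) else r
  have hdeg (p : V × Fin (m + 1)) : ((splittingGraph G m).degree p : ℝ) = w p.2 := by
    rw [splittingGraph_degree, hG.degree_eq]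
    split_ifs <;> simp [w, *]
  have hsum := two_mul_somborIndex (splittingGraph G m)
  simp only [hdeg] at hsum
  rw [sum_sum_ite_splittingGraph_adj G m (fun i j => √(w i ^ 2 + w j ^ 2)),
    Fin.sum_sum_ite_eq_zero_or_eq_zero] at hsum
  simp only [w, Fin.succ_ne_zero, if_true, if_false] at hsum
  have hdegsum : ∑ u, G.degree u = Fintype.card V * r := by simp [hG.degree_eq]
  have hs2 : √2 ^ 2 = 2 := Real.sq_sqrt zero_le_two
  set s := √((m + 1) ^ 2 + 1 : ℝ)
  have hdiag : √((r * (m + 1)) ^ 2 + (r * (m + 1)) ^ 2 : ℝ) = √2 * (r * (m + 1)) := by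
    rw [← two_mul, Real.sqrt_mul zero_le_two, Real.sqrt_sq (by positivity)]
  have hoff : √((r * (m + 1)) ^ 2 + r ^ 2 : ℝ) = r * s := by
    rw [show ((r * (m + 1)) ^ 2 + r ^ 2 : ℝ) = r ^ 2 * ((m + 1) ^ 2 + 1) by ring,
      Real.sqrt_mul (by positivity), Real.sqrt_sq (by positivity)]
  have hsplit : √(2 * m ^ 2 + 4 * m + 4 : ℝ) = √2 * s := by
    rw [← Real.sqrt_mul zero_le_two]
    ring_nf
  rw [hdegsum, hdiag, add_comm (r ^ 2 : ℝ), hoff] at hsum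
  simp only [Finset.sum_const, Finset.card_univ, Fintype.card_fin, nsmul_eq_mul] at hsum
  rw [hsplit]
  field_simp
  push_cast at hsum
  linear_combination (√2 / 2) * hsum + (Fintype.card V * r ^ 2 * (m + 1) / 2 : ℝ) * hs2

theorem sombor_index_splitting_complete (n m : ℕ) :
    somborIndex (splittingGraph (⊤ : SimpleGraph (Fin n)) m) =
      ((n : ℝ) * ((n : ℝ) - 1) ^ 2 / Real.sqrt 2) *
        ((m : ℝ) * Real.sqrt (2 * (m : ℝ) ^ 2 + 4 * m + 4) + (m + 1)) := by
  rw [somborIndex_splittingGraph_of_isRegularOfDegree IsRegularOfDegree.top, Fintype.card_fin]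
  -- `n - 1` is truncated in `ℕ`; at `n = 0` both sides vanish.
  rcases n with _ | n <;> simp
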